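/- arXiv:2112.15497 — 2 statements merged into one kernel-verified Lean document; each statement's English description precedes it below -/
import Mathlib

section
/- Let X be a real normed space, let C₁ > 0, let N be a natural number, and let u : (0,1] → X be a net satisfying ‖u(ε)‖ ≤ C₁ · ε^(−N) for all ε ∈ (0,1]. Define the reparametrisation μ(ε) = 1/(log(log(1/ε))). Then there exists ε₁ ∈ (0, e^(−e)) such that for all ε ∈ (0, ε₁) one has μ(ε) ∈ (0,1] and ‖u(μ(ε))‖ ≤ C₁ · log(1/ε); that is, the reparametrised net (u(μ(ε)))_ε is X-moderate of log-type even when the moderateness exponent N is unknown. -/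
open Set Filter Topology Real

/-!
As `ε → 0⁺`, `L = log (1/ε)` tends to infinity, and `μ = 1 / log L` lies in `(0, 1]` once
`L ≥ e`. Moderateness then bounds `‖u μ‖` by `C₁ μ⁻ᴺ = C₁ (log L)ᴺ`, and `(log L)ᴺ ≤ L` for large
`L` whatever `N` is.
-/

theorem exists_Ioo_forall_of_eventually_nhdsGT {α : Type*} [TopologicalSpace α] [LinearOrder α]
    [OrderTopology α] [DenselyOrdered α] {p : α → Prop} {a b : α} (hab : a < b)
    (h : ∀ᶠ x in 𝓝[>] a, p x) : ∃ c ∈ Ioo a b, ∀ x ∈ Ioo a c, p x := by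
  obtain ⟨b', hab', hb'b⟩ := exists_between hab
  obtain ⟨c, ⟨hac, hcb'⟩, hc⟩ := (mem_nhdsGT_iff_exists_mem_Ioc_Ioo_subset hab').1 h
  exact ⟨c, ⟨hac, hcb'.trans_lt hb'b⟩, fun x hx ↦ hc hx⟩

theorem tendsto_log_one_div_nhdsGT_zero : Tendsto (fun ε ↦ log (1 / ε)) (𝓝[>] 0) atTop := by
  simpa only [one_div, Function.comp_def] using tendsto_log_atTop.comp tendsto_inv_nhdsGT_zero

theorem eventually_log_pow_le_self (N : ℕ) : ∀ᶠ x in atTop, log x ^ N ≤ x := by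
  filter_upwards [isLittleO_pow_log_id_atTop.bound one_pos, eventually_ge_atTop 0] with x hx hx0
  simpa [abs_of_nonneg hx0] using (le_abs_self _).trans hx

theorem one_div_log_mem_Ioc {L : ℝ} (hL : exp 1 ≤ L) : 1 / log L ∈ Ioc 0 1 := by
  have h1 : 1 ≤ log L := (le_log_iff_exp_le ((exp_pos 1).trans_le hL)).2 hL
  exact ⟨one_div_pos.2 (by linarith), div_le_one_of_le₀ h1 (by linarith)⟩

theorem norm_le_mul_inv_pow {X : Type*} [NormedAddCommGroup X] {C : ℝ} {N : ℕ} {u : ℝ → X}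
    (hu : ∀ ε ∈ Ioc (0 : ℝ) 1, ‖u ε‖ ≤ C * ε ^ (-(N : ℝ))) {μ : ℝ} (hμ : μ ∈ Ioc 0 1) :
    ‖u μ‖ ≤ C * μ⁻¹ ^ N := by
  simpa [rpow_neg hμ.1.le, inv_pow] using hu μ hμ

/-- **Log-type reparametrisation of a moderate net (unknown exponent).**
If `u : (0,1] → X` satisfies `‖u ε‖ ≤ C₁ ε^{-N}`, then the reparametrised net
`ε ↦ u (1 / log (log (1/ε)))` is moderate of log-type with the same constant
`C₁`, for all sufficiently small `ε`. -/
theorem log_type_reparametrisation_unknown_exponent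
    (X : Type*) [NormedAddCommGroup X]
    (C₁ : ℝ) (hC₁ : 0 < C₁) (N : ℕ)
    (u : ℝ → X)
    (hu : ∀ ε ∈ Set.Ioc (0 : ℝ) 1, ‖u ε‖ ≤ C₁ * ε ^ (-(N : ℝ))) :
    ∃ ε₁ ∈ Set.Ioo (0 : ℝ) (Real.exp (-(Real.exp 1))),
      ∀ ε ∈ Set.Ioo (0 : ℝ) ε₁,
        1 / Real.log (Real.log (1 / ε)) ∈ Set.Ioc (0 : ℝ) 1 ∧
        ‖u (1 / Real.log (Real.log (1 / ε)))‖ ≤ C₁ * Real.log (1 / ε) := by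
  have hlarge : ∀ᶠ L in atTop, exp 1 ≤ L ∧ log L ^ N ≤ L :=
    (eventually_ge_atTop _).and (eventually_log_pow_le_self N)
  obtain ⟨ε₁, hε₁, hsmall⟩ := exists_Ioo_forall_of_eventually_nhdsGT (exp_pos _)
    (tendsto_log_one_div_nhdsGT_zero.eventually hlarge)
  refine ⟨ε₁, hε₁, fun ε hε ↦ ?_⟩
  obtain ⟨hLe, hLN⟩ := hsmall ε hε
  have hμ := one_div_log_mem_Ioc hLe
  refine ⟨hμ, ?_⟩
  calc ‖u (1 / log (log (1 / ε)))‖ ≤ C₁ * (1 / log (log (1 / ε)))⁻¹ ^ N :=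
        norm_le_mul_inv_pow hu hμ
    _ = C₁ * log (log (1 / ε)) ^ N := by rw [one_div, inv_inv]
    _ ≤ C₁ * log (1 / ε) := by gcongr
end

section
/- (Quantitative core of the existence theorem, Theorem 3.2.) Let T, c₀, C_{1/2} > 0 and set m = min(c₀/2, 1). Let u, c, b, g, f₁, f₂ : (0,1] → ℝ be nonnegative nets such that: c(ε) ≤ C_c ε^(−N_c), f₁(ε) ≤ C_{f₁} ε^(−N_{f₁}), f₂(ε) ≤ C_{f₂} ε^(−N_{f₂}), g(ε) ≤ C_g ε^(−N_g) for all ε ∈ (0,1] (with positive constants C and natural number exponents N), and b(ε) ≤ C_b log(1/ε) for all ε ∈ (0,1] with C_b > 0. Assume the energy inequality u(ε)² ≤ ( ((c(ε) + c₀ C_{1/2}(1+T))/m) · f₁(ε)² + f₂(ε)² + g(ε)² ) · exp( T (b(ε) + 1 + c₀ C_{1/2}(1+T))/m ) holds for all ε ∈ (0,1]. Then the net u is moderate: there exist C > 0 and a natural number N such that u(ε) ≤ C ε^(−N) for all ε ∈ (0,1]. -/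
/-!
The data nets enter the right-hand side of the energy inequality only through sums, products
and squares, under which moderate nets are closed. The coefficient `b` appears in an
exponential, and `b ≤ C log (1/ε)` turns `exp (a b + d)` into `e^d ε^(-a C)`, again moderate.
Hence `u²` is moderate, and so is `u`.
-/

open Set Real

def IsModerate (v : ℝ → ℝ) : Prop :=
  ∃ C > (0 : ℝ), ∃ N : ℕ, ∀ ε ∈ Ioc (0 : ℝ) 1, v ε ≤ C * ε ^ (-(N : ℝ))

lemma rpow_neg_le_rpow_neg {ε : ℝ} (hε : ε ∈ Ioc (0 : ℝ) 1) {a b : ℝ} (hab : a ≤ b) :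
    ε ^ (-a) ≤ ε ^ (-b) :=
  rpow_le_rpow_of_exponent_ge hε.1 hε.2 (neg_le_neg hab)

lemma one_le_rpow_neg {ε : ℝ} (hε : ε ∈ Ioc (0 : ℝ) 1) {a : ℝ} (ha : 0 ≤ a) :
    1 ≤ ε ^ (-a) :=
  one_le_rpow_of_pos_of_le_one_of_nonpos hε.1 hε.2 (neg_nonpos.2 ha)

lemma isModerate_const (a : ℝ) : IsModerate fun _ => a :=
  ⟨max a 1, by positivity, 0, fun ε _ => by simp⟩

lemma isModerate_exp_of_le_mul_log_add {v : ℝ → ℝ} {a d : ℝ}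
    (h : ∀ ε ∈ Ioc (0 : ℝ) 1, v ε ≤ a * log (1 / ε) + d) :
    IsModerate fun ε => exp (v ε) :=
  ⟨exp d, exp_pos d, ⌈a⌉₊, fun ε hε => calc
    exp (v ε) ≤ exp (a * log (1 / ε) + d) := exp_le_exp.2 (h ε hε)
    _ = exp d * ε ^ (-a) := by
      rw [exp_add, rpow_def_of_pos hε.1, mul_comm (exp _), one_div, log_inv]
      ring_nf
    _ ≤ exp d * ε ^ (-(⌈a⌉₊ : ℝ)) :=
      mul_le_mul_of_nonneg_left (rpow_neg_le_rpow_neg hε (Nat.le_ceil a)) (exp_pos d).le⟩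

namespace IsModerate

variable {u v w : ℝ → ℝ}

lemma of_le (hv : IsModerate v) (h : ∀ ε ∈ Ioc (0 : ℝ) 1, u ε ≤ v ε) : IsModerate u :=
  let ⟨C, hC, N, hN⟩ := hv
  ⟨C, hC, N, fun ε hε => (h ε hε).trans (hN ε hε)⟩

lemma add (hv : IsModerate v) (hw : IsModerate w) : IsModerate fun ε => v ε + w ε := by
  obtain ⟨C, hC, N, hN⟩ := hv
  obtain ⟨D, hD, M, hM⟩ := hw
  refine ⟨C + D, by positivity, max N M, fun ε hε => ?_⟩
  calc v ε + w ε ≤ C * ε ^ (-(N : ℝ)) + D * ε ^ (-(M : ℝ)) := add_le_add (hN ε hε) (hM ε hε)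
    _ ≤ C * ε ^ (-(max N M : ℕ) : ℝ) + D * ε ^ (-(max N M : ℕ) : ℝ) :=
      add_le_add
        (mul_le_mul_of_nonneg_left (rpow_neg_le_rpow_neg hε (by simp)) hC.le)
        (mul_le_mul_of_nonneg_left (rpow_neg_le_rpow_neg hε (by simp)) hD.le)
    _ = (C + D) * ε ^ (-(max N M : ℕ) : ℝ) := by ring

lemma mul (hv : IsModerate v) (hw : IsModerate w) (hw₀ : ∀ ε ∈ Ioc (0 : ℝ) 1, 0 ≤ w ε) :
    IsModerate fun ε => v ε * w ε := by
  obtain ⟨C, hC, N, hN⟩ := hv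
  obtain ⟨D, hD, M, hM⟩ := hw
  refine ⟨C * D, by positivity, N + M, fun ε hε => ?_⟩
  calc v ε * w ε ≤ C * ε ^ (-(N : ℝ)) * w ε := mul_le_mul_of_nonneg_right (hN ε hε) (hw₀ ε hε)
    _ ≤ C * ε ^ (-(N : ℝ)) * (D * ε ^ (-(M : ℝ))) :=
      mul_le_mul_of_nonneg_left (hM ε hε) (by have := hε.1; positivity)
    _ = C * D * ε ^ (-((N + M : ℕ) : ℝ)) := by
      rw [Nat.cast_add, neg_add, rpow_add hε.1]; ring

lemma div_const (hv : IsModerate v) {a : ℝ} (ha : 0 ≤ a) : IsModerate fun ε => v ε / a := by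
  simpa only [div_eq_mul_inv] using hv.mul (isModerate_const a⁻¹) fun _ _ => inv_nonneg.2 ha

lemma pow (hv : IsModerate v) (hv₀ : ∀ ε ∈ Ioc (0 : ℝ) 1, 0 ≤ v ε) :
    ∀ n : ℕ, IsModerate fun ε => v ε ^ n
  | 0 => by simpa only [pow_zero] using isModerate_const 1
  | n + 1 => by simpa only [pow_succ] using (hv.pow hv₀ n).mul hv hv₀

lemma of_sq (hv : IsModerate fun ε => v ε ^ 2) : IsModerate v := by
  obtain ⟨C, hC, N, hN⟩ := hv
  refine ⟨√C, sqrt_pos.2 hC, N, fun ε hε => ?_⟩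
  calc v ε ≤ √(v ε ^ 2) := by rw [sqrt_sq_eq_abs]; exact le_abs_self _
    _ ≤ √(C * ε ^ (-(N : ℝ))) := sqrt_le_sqrt (hN ε hε)
    _ = √C * √(ε ^ (-(N : ℝ))) := sqrt_mul hC.le _
    _ ≤ √C * ε ^ (-(N : ℝ)) :=
      mul_le_mul_of_nonneg_left (sqrt_le_self_iff.2 (.inr (one_le_rpow_neg hε N.cast_nonneg)))
        (sqrt_nonneg C)

end IsModerate

theorem very_weak_solution_moderate_general
    (T c₀ Chalf : ℝ) (hT : 0 < T) (hc₀ : 0 < c₀)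
    (u c b g f₁ f₂ : ℝ → ℝ)
    (hgnn : ∀ ε ∈ Set.Ioc (0 : ℝ) 1, 0 ≤ g ε)
    (hf₁nn : ∀ ε ∈ Set.Ioc (0 : ℝ) 1, 0 ≤ f₁ ε)
    (hf₂nn : ∀ ε ∈ Set.Ioc (0 : ℝ) 1, 0 ≤ f₂ ε)
    (Cc Cf₁ Cf₂ Cg Cb : ℝ) (Nc Nf₁ Nf₂ Ng : ℕ)
    (hCc : 0 < Cc) (hCf₁ : 0 < Cf₁) (hCf₂ : 0 < Cf₂) (hCg : 0 < Cg)
    (hc : ∀ ε ∈ Set.Ioc (0 : ℝ) 1, c ε ≤ Cc * ε ^ (-(Nc : ℝ)))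
    (hf₁ : ∀ ε ∈ Set.Ioc (0 : ℝ) 1, f₁ ε ≤ Cf₁ * ε ^ (-(Nf₁ : ℝ)))
    (hf₂ : ∀ ε ∈ Set.Ioc (0 : ℝ) 1, f₂ ε ≤ Cf₂ * ε ^ (-(Nf₂ : ℝ)))
    (hg : ∀ ε ∈ Set.Ioc (0 : ℝ) 1, g ε ≤ Cg * ε ^ (-(Ng : ℝ)))
    (hb : ∀ ε ∈ Set.Ioc (0 : ℝ) 1, b ε ≤ Cb * Real.log (1 / ε))
    (henergy : ∀ ε ∈ Set.Ioc (0 : ℝ) 1,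
      u ε ^ 2 ≤
        (((c ε + c₀ * Chalf * (1 + T)) / min (c₀ / 2) 1) * f₁ ε ^ 2 +
            f₂ ε ^ 2 + g ε ^ 2) *
          Real.exp (T * ((b ε + 1 + c₀ * Chalf * (1 + T)) / min (c₀ / 2) 1))) :
    ∃ C > (0 : ℝ), ∃ N : ℕ, ∀ ε ∈ Set.Ioc (0 : ℝ) 1,
      u ε ≤ C * ε ^ (-(N : ℝ)) := by
  show IsModerate u
  set m := min (c₀ / 2) 1
  set A := c₀ * Chalf * (1 + T)
  have hm : 0 < m := lt_min (by positivity) one_pos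
  have hc' : IsModerate c := ⟨Cc, hCc, Nc, hc⟩
  have hf₁' : IsModerate f₁ := ⟨Cf₁, hCf₁, Nf₁, hf₁⟩
  have hf₂' : IsModerate f₂ := ⟨Cf₂, hCf₂, Nf₂, hf₂⟩
  have hg' : IsModerate g := ⟨Cg, hCg, Ng, hg⟩
  have hdata : IsModerate fun ε => (c ε + A) / m * f₁ ε ^ 2 + f₂ ε ^ 2 + g ε ^ 2 :=
    ((((hc'.add (isModerate_const A)).div_const hm.le).mul (hf₁'.pow hf₁nn 2)
      fun ε _ => sq_nonneg (f₁ ε)).add (hf₂'.pow hf₂nn 2)).add (hg'.pow hgnn 2)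
  have hgrowth : IsModerate fun ε => exp (T * ((b ε + 1 + A) / m)) := by
    refine isModerate_exp_of_le_mul_log_add (a := T / m * Cb) (d := T * (1 + A) / m)
      fun ε hε => ?_
    have := mul_le_mul_of_nonneg_left (hb ε hε) (div_nonneg hT.le hm.le)
    linear_combination this
  exact ((hdata.mul hgrowth fun ε _ => (exp_pos _).le).of_le henergy).of_sq

/-- **Quantitative core of the existence theorem (Theorem 3.2).**
If the data nets `c, f₁, f₂, g` are moderate, `b` is moderate of log-type, and
the energy inequality holds, then the solution net `u` is moderate. -/
theorem very_weak_solution_moderate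
    (T c₀ Chalf : ℝ) (hT : 0 < T) (hc₀ : 0 < c₀) (hChalf : 0 < Chalf)
    (u c b g f₁ f₂ : ℝ → ℝ)
    (hunn : ∀ ε ∈ Set.Ioc (0 : ℝ) 1, 0 ≤ u ε)
    (hcnn : ∀ ε ∈ Set.Ioc (0 : ℝ) 1, 0 ≤ c ε)
    (hbnn : ∀ ε ∈ Set.Ioc (0 : ℝ) 1, 0 ≤ b ε)
    (hgnn : ∀ ε ∈ Set.Ioc (0 : ℝ) 1, 0 ≤ g ε)
    (hf₁nn : ∀ ε ∈ Set.Ioc (0 : ℝ) 1, 0 ≤ f₁ ε)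
    (hf₂nn : ∀ ε ∈ Set.Ioc (0 : ℝ) 1, 0 ≤ f₂ ε)
    (Cc Cf₁ Cf₂ Cg Cb : ℝ) (Nc Nf₁ Nf₂ Ng : ℕ)
    (hCc : 0 < Cc) (hCf₁ : 0 < Cf₁) (hCf₂ : 0 < Cf₂) (hCg : 0 < Cg)
    (hCb : 0 < Cb)
    (hc : ∀ ε ∈ Set.Ioc (0 : ℝ) 1, c ε ≤ Cc * ε ^ (-(Nc : ℝ)))
    (hf₁ : ∀ ε ∈ Set.Ioc (0 : ℝ) 1, f₁ ε ≤ Cf₁ * ε ^ (-(Nf₁ : ℝ)))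
    (hf₂ : ∀ ε ∈ Set.Ioc (0 : ℝ) 1, f₂ ε ≤ Cf₂ * ε ^ (-(Nf₂ : ℝ)))
    (hg : ∀ ε ∈ Set.Ioc (0 : ℝ) 1, g ε ≤ Cg * ε ^ (-(Ng : ℝ)))
    (hb : ∀ ε ∈ Set.Ioc (0 : ℝ) 1, b ε ≤ Cb * Real.log (1 / ε))
    (henergy : ∀ ε ∈ Set.Ioc (0 : ℝ) 1,
      u ε ^ 2 ≤
        (((c ε + c₀ * Chalf * (1 + T)) / min (c₀ / 2) 1) * f₁ ε ^ 2 +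
            f₂ ε ^ 2 + g ε ^ 2) *
          Real.exp (T * ((b ε + 1 + c₀ * Chalf * (1 + T)) / min (c₀ / 2) 1))) :
    ∃ C > (0 : ℝ), ∃ N : ℕ, ∀ ε ∈ Set.Ioc (0 : ℝ) 1,
      u ε ≤ C * ε ^ (-(N : ℝ)) :=
  very_weak_solution_moderate_general T c₀ Chalf hT hc₀ u c b g f₁ f₂ hgnn hf₁nn hf₂nn Cc Cf₁ Cf₂ Cg
    Cb Nc Nf₁ Nf₂ Ng hCc hCf₁ hCf₂ hCg hc hf₁ hf₂ hg hb henergy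
end
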